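/- arXiv:math-ph/0506047 — 3 statements merged into one kernel-verified Lean document; each statement's English description precedes it below -/
import Mathlib

section
/- Let P be a nonzero real 3×3 skew-symmetric matrix and a, b ∈ ℝ³ vectors with P b = 0. Then P a = 0 if and only if P a + g(a) b = 0. (At regular points, the Hamiltonian vector field ξ_P = PdH and the metriplectic vector field ξ = PdH + gdS vanish simultaneously.) -/
open Matrix RealInnerProductSpace

/-- The dissipative tensor `g(a) = a ⊗ a − ‖a‖² I` of the paper, as a 3×3 matrix;
it acts by `g(a) v = ⟨a, v⟩ a − ‖a‖² v`. -/
noncomputable def gmat (a : EuclideanSpace ℝ (Fin 3)) : Matrix (Fin 3) (Fin 3) ℝ :=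
  Matrix.vecMulVec a a - (‖a‖ ^ 2) • 1

/-!
Write the skew-symmetric `P` as `v ↦ p ⨯₃ v` with `p ≠ 0`, and note `g(a) b = a ⨯₃ (a ⨯₃ b)`.
Both directions reduce to `a ⨯₃ b = 0`. If `p ⨯₃ a = 0`, then `a` and `b` are both multiples
of `p`. Conversely, dotting `p ⨯₃ a + a ⨯₃ (a ⨯₃ b) = 0` with `b` kills the first term (as
`b ⨯₃ p = 0`) and leaves `-‖a ⨯₃ b‖²`.
-/

namespace Matrix

variable {R : Type*}

def axialVec (P : Matrix (Fin 3) (Fin 3) R) : Fin 3 → R :=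
  ![P 2 1, P 0 2, P 1 0]

variable [CommRing R] [NoZeroDivisors R] [CharZero R] {P : Matrix (Fin 3) (Fin 3) R}

theorem mulVec_eq_axialVec_cross (hP : Pᵀ = -P) (v : Fin 3 → R) :
    P *ᵥ v = axialVec P ⨯₃ v := by
  have hskew (i j : Fin 3) : P j i = -P i j := congrFun (congrFun hP i) j
  have hdiag (i : Fin 3) : P i i = 0 := CharZero.eq_neg_self_iff.mp (hskew i i)
  ext i
  fin_cases i <;>
    simp [axialVec, cross_apply, mulVec, dotProduct, Fin.sum_univ_three, hdiag, hskew 1 0,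
      hskew 2 1, hskew 0 2] <;> ring

theorem axialVec_eq_zero_iff (hP : Pᵀ = -P) : axialVec P = 0 ↔ P = 0 := by
  refine ⟨fun h ↦ ext_iff_mulVec.mpr fun v ↦ ?_, fun h ↦ by simp [h, axialVec]⟩
  simp [mulVec_eq_axialVec_cross hP, h]

end Matrix

theorem cross_eq_zero_of_cross_eq_zero_of_ne_zero {F : Type*} [Field F] {p v w : Fin 3 → F}
    (hp : p ≠ 0) (hv : p ⨯₃ v = 0) (hw : p ⨯₃ w = 0) : v ⨯₃ w = 0 := by
  obtain ⟨c, rfl⟩ : ∃ c : F, c • p = v := by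
    have hdep : ¬LinearIndependent F ![p, v] := by
      rwa [← crossProduct_ne_zero_iff_linearIndependent, not_not]
    simpa [LinearIndependent.pair_iff' hp] using hdep
  simp [hw]

theorem cross_eq_zero_of_cross_add_cross_cross_eq_zero {R : Type*} [CommRing R] [LinearOrder R]
    [IsStrictOrderedRing R] {p v w : Fin 3 → R} (hw : p ⨯₃ w = 0)
    (h : p ⨯₃ v + v ⨯₃ (v ⨯₃ w) = 0) : v ⨯₃ w = 0 := by
  have hpv : w ⬝ᵥ p ⨯₃ v = 0 := by
    rw [triple_product_permutation, triple_product_permutation, ← cross_anticomm p w, hw,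
      neg_zero, dotProduct_zero]
  have hvvw : w ⬝ᵥ v ⨯₃ (v ⨯₃ w) = -((v ⨯₃ w) ⬝ᵥ (v ⨯₃ w)) := by
    rw [triple_product_permutation, triple_product_permutation, ← cross_anticomm v w,
      dotProduct_neg]
  have hdot : w ⬝ᵥ (p ⨯₃ v + v ⨯₃ (v ⨯₃ w)) = 0 := by rw [h, dotProduct_zero]
  rw [dotProduct_add, hpv, hvvw, zero_add, neg_eq_zero] at hdot
  exact dotProduct_self_eq_zero.mp hdot

theorem cross_eq_zero_iff_cross_add_cross_cross_eq_zero {F : Type*} [Field F] [LinearOrder F]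
    [IsStrictOrderedRing F] {p v w : Fin 3 → F} (hp : p ≠ 0) (hw : p ⨯₃ w = 0) :
    p ⨯₃ v = 0 ↔ p ⨯₃ v + v ⨯₃ (v ⨯₃ w) = 0 := by
  constructor
  · intro hv
    simp [hv, cross_eq_zero_of_cross_eq_zero_of_ne_zero hp hv hw]
  · intro h
    simpa [cross_eq_zero_of_cross_add_cross_cross_eq_zero hw h] using h

theorem gmat_mulVec (a b : EuclideanSpace ℝ (Fin 3)) : gmat a *ᵥ b = a ⨯₃ (a ⨯₃ b) := by
  rw [cross_cross_eq_smul_sub_smul', gmat, sub_mulVec, vecMulVec_mulVec, smul_mulVec,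
    one_mulVec, ← real_inner_self_eq_norm_sq, EuclideanSpace.inner_eq_star_dotProduct,
    dotProduct_comm]
  simp

/-- At regular points, the Hamiltonian vector field `P dH` and the metriplectic vector
field `P dH + g dS` vanish simultaneously. -/
theorem regular_equilibria_iff (P : Matrix (Fin 3) (Fin 3) ℝ) (hP : Pᵀ = -P) (hP0 : P ≠ 0)
    (a b : EuclideanSpace ℝ (Fin 3)) (hb : P *ᵥ b = 0) :
    P *ᵥ a = 0 ↔ P *ᵥ a + gmat a *ᵥ b = 0 := by
  rw [mulVec_eq_axialVec_cross hP] at hb ⊢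
  rw [gmat_mulVec]
  exact cross_eq_zero_iff_cross_add_cross_cross_eq_zero ((axialVec_eq_zero_iff hP).not.mpr hP0) hb
end

section
/- Let H, S : ℝ³ → ℝ be differentiable, let P : ℝ³ → M₃(ℝ) assign to each point a skew-symmetric matrix, and let x : ℝ → ℝ³ be a differentiable curve satisfying the metriplectic equation x'(t) = P(x(t))∇H(x(t)) + g(∇H(x(t)))∇S(x(t)) for all t. Then H(x(t)) is constant in t; i.e., the Hamiltonian H is conserved along every solution of the metriplectic system. -/
/-!
Along a solution, `d/dt H(x) = ⟨∇H, P ∇H⟩ + ⟨∇H, g(∇H) ∇S⟩`. The first term vanishes because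
`P` is skew-symmetric, the second because `⟨a, g(a) v⟩ = ⟨a, v⟩ ‖a‖² - ‖a‖² ⟨a, v⟩ = 0`.
-/

open Matrix RealInnerProductSpace

noncomputable def grad (f : EuclideanSpace ℝ (Fin 3) → ℝ) (x : EuclideanSpace ℝ (Fin 3)) :
    EuclideanSpace ℝ (Fin 3) := gradient f x

theorem Matrix.dotProduct_mulVec_self_eq_zero_of_transpose_eq_neg {n R : Type*} [Fintype n]
    [CommRing R] [IsAddTorsionFree R] {M : Matrix n n R} (hM : Mᵀ = -M) (a : n → R) :
    a ⬝ᵥ (M *ᵥ a) = 0 := by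
  refine self_eq_neg.mp ?_
  calc a ⬝ᵥ (M *ᵥ a) = (M *ᵥ a) ⬝ᵥ a := dotProduct_comm _ _
    _ = a ⬝ᵥ (Mᵀ *ᵥ a) := by rw [dotProduct_mulVec, vecMul_transpose]
    _ = -(a ⬝ᵥ (M *ᵥ a)) := by rw [hM, neg_mulVec, dotProduct_neg]

theorem EuclideanSpace.inner_toLp_mulVec_self_eq_zero {n : Type*} [Fintype n]
    {M : Matrix n n ℝ} (hM : Mᵀ = -M) (a : EuclideanSpace ℝ n) :
    ⟪a, WithLp.toLp 2 (M *ᵥ a)⟫ = 0 := by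
  rw [EuclideanSpace.inner_eq_star_dotProduct, star_trivial, dotProduct_comm]
  exact dotProduct_mulVec_self_eq_zero_of_transpose_eq_neg hM a

theorem toLp_gmat_mulVec (a v : EuclideanSpace ℝ (Fin 3)) :
    WithLp.toLp 2 (gmat a *ᵥ v) = ⟪a, v⟫ • a - ‖a‖ ^ 2 • v := by
  ext i
  simp [gmat, sub_mulVec, smul_mulVec, vecMulVec_mulVec, EuclideanSpace.inner_eq_star_dotProduct,
    dotProduct_comm]

theorem inner_toLp_gmat_mulVec (a v : EuclideanSpace ℝ (Fin 3)) :
    ⟪a, WithLp.toLp 2 (gmat a *ᵥ v)⟫ = 0 := by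
  rw [toLp_gmat_mulVec, inner_sub_right, real_inner_smul_right, real_inner_smul_right,
    real_inner_self_eq_norm_sq]
  ring

theorem is_const_comp_of_inner_gradient_eq_zero {E : Type*} [NormedAddCommGroup E]
    [InnerProductSpace ℝ E] [CompleteSpace E] {f : E → ℝ} (hf : Differentiable ℝ f)
    {γ γ' : ℝ → E} (hγ : ∀ t, HasDerivAt γ (γ' t) t)
    (horth : ∀ t, ⟪gradient f (γ t), γ' t⟫ = 0) (t s : ℝ) :
    f (γ t) = f (γ s) := by
  have hderiv : ∀ t, HasDerivAt (f ∘ γ) 0 t := fun t => by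
    have h := (hf (γ t)).hasGradientAt.hasFDerivAt.comp_hasDerivAt t (hγ t)
    rwa [InnerProductSpace.toDual_apply_apply, horth t] at h
  exact is_const_of_deriv_eq_zero (fun t => (hderiv t).differentiableAt)
    (fun t => (hderiv t).deriv) t s

theorem hamiltonian_conserved_general (H S : EuclideanSpace ℝ (Fin 3) → ℝ)
    (hH : Differentiable ℝ H)
    (P : EuclideanSpace ℝ (Fin 3) → Matrix (Fin 3) (Fin 3) ℝ)
    (hskew : ∀ m, (P m)ᵀ = -(P m))
    (x : ℝ → EuclideanSpace ℝ (Fin 3))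
    (hx : ∀ t, HasDerivAt x
      (WithLp.toLp 2 (P (x t) *ᵥ grad H (x t) + gmat (grad H (x t)) *ᵥ grad S (x t))) t) :
    ∀ t s : ℝ, H (x t) = H (x s) :=
  is_const_comp_of_inner_gradient_eq_zero hH hx fun t => by
    rw [WithLp.toLp_add, inner_add_right, ← grad,
      EuclideanSpace.inner_toLp_mulVec_self_eq_zero (hskew _), inner_toLp_gmat_mulVec, add_zero]

/-- The Hamiltonian `H` is conserved along every solution of the metriplectic system
`ẋ = P∇H + g(∇H)∇S`. -/
theorem hamiltonian_conserved (H S : EuclideanSpace ℝ (Fin 3) → ℝ)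
    (hH : Differentiable ℝ H) (hS : Differentiable ℝ S)
    (P : EuclideanSpace ℝ (Fin 3) → Matrix (Fin 3) (Fin 3) ℝ)
    (hskew : ∀ m, (P m)ᵀ = -(P m))
    (x : ℝ → EuclideanSpace ℝ (Fin 3))
    (hx : ∀ t, HasDerivAt x
      (WithLp.toLp 2 (P (x t) *ᵥ grad H (x t) + gmat (grad H (x t)) *ᵥ grad S (x t))) t) :
    ∀ t s : ℝ, H (x t) = H (x s) :=
  hamiltonian_conserved_general H S hH P hskew x hx
end

section
/- Let H, S : ℝ³ → ℝ be smooth (C^∞) functions, let P : ℝ³ → M₃(ℝ) be a smooth map assigning to each point a skew-symmetric matrix with P(x)∇S(x) = 0 for all x, and let x : ℝ → ℝ³ be a differentiable curve satisfying the metriplectic equation x'(t) = P(x(t))∇H(x(t)) + g(∇H(x(t)))∇S(x(t)) for all t. If ∇S(x(0)) = 0, then ∇S(x(t)) = 0 for all t; i.e., the vanishing of dS propagates along the entire trajectory, and along it the system is purely Hamiltonian. -/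
open Matrix RealInnerProductSpace

open InnerProductSpace

section Aux

abbrev E3 := EuclideanSpace ℝ (Fin 3)

lemma aux_gronwall {E : Type*} [NormedAddCommGroup E] [NormedSpace ℝ E]
    {f f' : ℝ → E} {c : ℝ → ℝ}
    (hd : ∀ t, HasDerivAt f (f' t) t) (hc : Continuous c)
    (hb : ∀ t, ‖f' t‖ ≤ c t * ‖f t‖) (h0 : f 0 = 0) : ∀ t, f t = 0 := by
  have key : ∀ (g g' : ℝ → E) (d : ℝ → ℝ), (∀ t, HasDerivAt g (g' t) t) → Continuous d →
      (∀ t, ‖g' t‖ ≤ d t * ‖g t‖) → g 0 = 0 → ∀ t, 0 ≤ t → g t = 0 := by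
    intro g g' d hgd hdc hgb hg0 t ht
    obtain ⟨K, hK⟩ := (isCompact_Icc (a := (0:ℝ)) (b := t)).exists_bound_of_continuousOn
      hdc.continuousOn
    have main := norm_le_gronwallBound_of_norm_deriv_right_le
      (f := g) (f' := g') (δ := 0) (K := K) (ε := 0) (a := 0) (b := t)
      (fun s _ => (hgd s).continuousAt.continuousWithinAt)
      (fun s _ => (hgd s).hasDerivWithinAt)
      (by simp [hg0])
      (fun s hs => by
        refine le_trans (hgb s) ?_
        rw [add_zero]
        have h1 : d s ≤ K := le_trans (le_abs_self _) (hK s ⟨hs.1, hs.2.le⟩)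
        exact mul_le_mul_of_nonneg_right h1 (norm_nonneg _))
    have h2 := main t ⟨ht, le_rfl⟩
    rw [gronwallBound_ε0_δ0] at h2
    exact norm_le_zero_iff.mp h2
  intro t
  rcases le_or_gt 0 t with ht | ht
  · exact key f f' c hd hc hb h0 t ht
  · have hneg : ∀ s, HasDerivAt (fun u => f (-u)) ((-1 : ℝ) • f' (-s)) s := fun s =>
      HasDerivAt.scomp s (hd (-s)) (hasDerivAt_neg s)
    have := key (fun u => f (-u)) (fun s => (-1 : ℝ) • f' (-s)) (fun s => c (-s))
      hneg (hc.comp continuous_neg)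
      (fun s => by simpa using hb (-s)) (by simpa using h0) (-t) (by linarith)
    simpa using this

lemma gradient_contDiff {S : E3 → ℝ} (hS : ContDiff ℝ (⊤ : ℕ∞) S) :
    ContDiff ℝ (⊤ : ℕ∞) (fun m : E3 => gradient S m) :=
  ((toDual ℝ E3).symm.toContinuousLinearEquiv.toContinuousLinearMap.contDiff).comp
    (hS.fderiv_right (by simp))

lemma gradient_fderiv_symm {S : E3 → ℝ} (hS : ContDiff ℝ (⊤ : ℕ∞) S) (m v w : E3) :
    ⟪fderiv ℝ (fun m => gradient S m) m v, w⟫ = ⟪fderiv ℝ (fun m => gradient S m) m w, v⟫ := by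
  have hG : ContDiff ℝ (⊤ : ℕ∞) (fun m : E3 => gradient S m) := gradient_contDiff hS
  have hfd : ContDiff ℝ (⊤ : ℕ∞) (fderiv ℝ S) := hS.fderiv_right (by simp)
  have key : ∀ u w : E3, ⟪fderiv ℝ (fun m => gradient S m) m u, w⟫
      = fderiv ℝ (fderiv ℝ S) m u w := by
    intro u w
    have h1 : HasFDerivAt (fun m => ⟪w, gradient S m⟫)
        ((innerSL ℝ w).comp (fderiv ℝ (fun m => gradient S m) m)) m :=
      (innerSL ℝ w).hasFDerivAt.comp m (hG.differentiable (by simp) m).hasFDerivAt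
    have h2 : HasFDerivAt (fun m => fderiv ℝ S m w)
        ((ContinuousLinearMap.apply ℝ ℝ w).comp (fderiv ℝ (fderiv ℝ S) m)) m :=
      (ContinuousLinearMap.apply ℝ ℝ w).hasFDerivAt.comp m
        (hfd.differentiable (by simp) m).hasFDerivAt
    have heq : (fun m : E3 => ⟪w, gradient S m⟫) = (fun m => fderiv ℝ S m w) := by
      funext m
      rw [real_inner_comm]
      exact toDual_symm_apply
    rw [heq] at h1
    have h3 := h1.unique h2
    calc ⟪fderiv ℝ (fun m => gradient S m) m u, w⟫
        = ((innerSL ℝ w).comp (fderiv ℝ (fun m => gradient S m) m)) u :=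
          real_inner_comm _ _
      _ = ((ContinuousLinearMap.apply ℝ ℝ w).comp (fderiv ℝ (fderiv ℝ S) m)) u := by rw [h3]
      _ = fderiv ℝ (fderiv ℝ S) m u w := rfl
  rw [key v w, key w v]
  exact second_derivative_symmetric (f := S) (f' := fderiv ℝ S)
    (fun y => (hS.differentiable (by simp) y).hasFDerivAt)
    ((hfd.differentiable (by simp) m).hasFDerivAt) v w

lemma casimir_deriv {S : E3 → ℝ} (hS : ContDiff ℝ (⊤ : ℕ∞) S) {P : E3 → Matrix (Fin 3) (Fin 3) ℝ}
    (hPsmooth : ∀ i j, ContDiff ℝ (⊤ : ℕ∞) fun m => P m i j)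
    (hCasimir : ∀ m : E3, P m *ᵥ (fun j => gradient S m j) = 0) (m v : E3) (i : Fin 3) :
    ∑ j, (fderiv ℝ (fun m => P m i j) m v) * gradient S m j
      + ∑ j, P m i j * (fderiv ℝ (fun m => gradient S m) m v) j = 0 := by
  have hG : ContDiff ℝ (⊤ : ℕ∞) (fun m : E3 => gradient S m) := gradient_contDiff hS
  have hder : HasFDerivAt (fun m => ∑ j, P m i j * gradient S m j)
      (∑ j, ((P m i j) • ((EuclideanSpace.proj j).comp (fderiv ℝ (fun m => gradient S m) m))
        + (gradient S m j) • (fderiv ℝ (fun m => P m i j) m))) m := by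
    apply HasFDerivAt.fun_sum
    intro j _
    have hj : HasFDerivAt (fun y : E3 => gradient S y j)
        ((EuclideanSpace.proj j : E3 →L[ℝ] ℝ).comp (fderiv ℝ (fun m => gradient S m) m)) m :=
      (EuclideanSpace.proj j : E3 →L[ℝ] ℝ).hasFDerivAt.comp m
        (hG.differentiable (by simp) m).hasFDerivAt
    exact ((hPsmooth i j).differentiable (by simp) m).hasFDerivAt.mul hj
  have hzero : (fun m => ∑ j, P m i j * gradient S m j) = fun _ => (0:ℝ) := by
    funext m
    have := congrFun (hCasimir m) i
    simpa [Matrix.mulVec, dotProduct] using this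
  rw [hzero] at hder
  have h0 := hder.unique (hasFDerivAt_const 0 m)
  have h1 := congrArg (fun L => L v) h0
  simp only [ContinuousLinearMap.sum_apply, ContinuousLinearMap.add_apply,
    ContinuousLinearMap.smul_apply, ContinuousLinearMap.comp_apply,
    ContinuousLinearMap.zero_apply, smul_eq_mul] at h1
  rw [Finset.sum_add_distrib] at h1
  rw [← h1]
  rw [add_comm]
  congr 1
  exact Finset.sum_congr rfl fun j _ => mul_comm _ _

lemma comp_le_norm (w : E3) (k : Fin 3) : |w k| ≤ ‖w‖ := by
  have h := abs_real_inner_le_norm w (EuclideanSpace.single k (1:ℝ))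
  simpa [EuclideanSpace.inner_single_right] using h

lemma norm_le_sum_abs (w : E3) : ‖w‖ ≤ ∑ i, |w i| := by
  rw [EuclideanSpace.norm_eq]
  have h1 : ∑ i, ‖w i‖^2 ≤ (∑ i, |w i|)^2 := by
    simpa [Real.norm_eq_abs] using
      Finset.sum_sq_le_sq_sum_of_nonneg (f := fun i => |w i|) (fun i _ => abs_nonneg _)
  calc Real.sqrt (∑ i, ‖w i‖^2) ≤ Real.sqrt ((∑ i, |w i|)^2) := Real.sqrt_le_sqrt h1
    _ = ∑ i, |w i| := Real.sqrt_sq (Finset.sum_nonneg fun i _ => abs_nonneg _)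

end Aux

section Aux2

noncomputable def toE (v : Fin 3 → ℝ) : E3 := (WithLp.equiv 2 (Fin 3 → ℝ)).symm v

lemma term1_repr {S : E3 → ℝ} (hS : ContDiff ℝ (⊤ : ℕ∞) S) {P : E3 → Matrix (Fin 3) (Fin 3) ℝ}
    (hPsmooth : ∀ i j, ContDiff ℝ (⊤ : ℕ∞) fun m => P m i j)
    (hskew : ∀ m, (P m)ᵀ = -(P m))
    (hCasimir : ∀ m : E3, P m *ᵥ (fun j => gradient S m j) = 0) (m h : E3) (i : Fin 3) :
    fderiv ℝ (fun m => gradient S m) m (toE (P m *ᵥ fun j => h j)) i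
      = ∑ k, (∑ j, fderiv ℝ (fun m => P m k j) m (EuclideanSpace.single i (1:ℝ))
          * gradient S m j) * h k := by
  set A : E3 := fderiv ℝ (fun m => gradient S m) m (EuclideanSpace.single i (1:ℝ)) with hA
  have step1 : fderiv ℝ (fun m => gradient S m) m (toE (P m *ᵥ fun j => h j)) i
      = ⟪fderiv ℝ (fun m => gradient S m) m (toE (P m *ᵥ fun j => h j)),
          EuclideanSpace.single i (1:ℝ)⟫ := by
    rw [EuclideanSpace.inner_single_right]
    simp
  rw [step1, gradient_fderiv_symm hS m _ _, ← hA]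
  have expand : ⟪A, toE (P m *ᵥ fun j => h j)⟫ = ∑ j, A j * ∑ k, P m j k * h k := by
    simp [PiLp.inner_apply, Matrix.mulVec, dotProduct, toE]
    exact Finset.sum_congr rfl fun j _ => mul_comm _ _
  rw [expand]
  calc ∑ j, A j * ∑ k, P m j k * h k
      = ∑ j, ∑ k, P m j k * A j * h k := by
        refine Finset.sum_congr rfl fun j _ => ?_
        rw [Finset.mul_sum]
        exact Finset.sum_congr rfl fun k _ => by ring
    _ = ∑ k, ∑ j, P m j k * A j * h k := Finset.sum_comm
    _ = ∑ k, (∑ j, P m j k * A j) * h k := by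
        exact Finset.sum_congr rfl fun k _ => (Finset.sum_mul _ _ _).symm
    _ = ∑ k, (∑ j, fderiv ℝ (fun m => P m k j) m (EuclideanSpace.single i (1:ℝ))
          * gradient S m j) * h k := by
        refine Finset.sum_congr rfl fun k _ => ?_
        congr 1
        have hcd := casimir_deriv hS hPsmooth hCasimir m (EuclideanSpace.single i (1:ℝ)) k
        rw [← hA] at hcd
        have hflip : ∑ j, P m j k * A j = -∑ j, P m k j * A j := by
          rw [← Finset.sum_neg_distrib]
          refine Finset.sum_congr rfl fun j _ => ?_
          have hsk := congrFun (congrFun (hskew m) j) k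
          simp only [Matrix.transpose_apply, Matrix.neg_apply] at hsk
          rw [hsk]; ring
        rw [hflip]
        linarith [hcd]

lemma term1_bound {S : E3 → ℝ} (hS : ContDiff ℝ (⊤ : ℕ∞) S) {P : E3 → Matrix (Fin 3) (Fin 3) ℝ}
    (hPsmooth : ∀ i j, ContDiff ℝ (⊤ : ℕ∞) fun m => P m i j)
    (hskew : ∀ m, (P m)ᵀ = -(P m))
    (hCasimir : ∀ m : E3, P m *ᵥ (fun j => gradient S m j) = 0) (m h : E3) :
    ‖fderiv ℝ (fun m => gradient S m) m (toE (P m *ᵥ fun j => h j))‖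
      ≤ (∑ i, ∑ k, ∑ j, |fderiv ℝ (fun m => P m k j) m (EuclideanSpace.single i (1:ℝ))|)
        * ‖h‖ * ‖gradient S m‖ := by
  set u := fderiv ℝ (fun m => gradient S m) m (toE (P m *ᵥ fun j => h j)) with hu
  refine (norm_le_sum_abs u).trans ?_
  have hbound : ∀ i, |u i| ≤ (∑ k, ∑ j,
      |fderiv ℝ (fun m => P m k j) m (EuclideanSpace.single i (1:ℝ))|)
        * ‖h‖ * ‖gradient S m‖ := by
    intro i
    rw [hu, term1_repr hS hPsmooth hskew hCasimir m h i]
    refine (Finset.abs_sum_le_sum_abs _ _).trans ?_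
    have hterm : ∀ k : Fin 3, |(∑ j, fderiv ℝ (fun m => P m k j) m
          (EuclideanSpace.single i (1:ℝ)) * gradient S m j) * h k|
        ≤ (∑ j, |fderiv ℝ (fun m => P m k j) m (EuclideanSpace.single i (1:ℝ))|)
          * ‖h‖ * ‖gradient S m‖ := by
      intro k
      rw [abs_mul]
      have h1 : |∑ j, fderiv ℝ (fun m => P m k j) m (EuclideanSpace.single i (1:ℝ))
            * gradient S m j|
          ≤ (∑ j, |fderiv ℝ (fun m => P m k j) m (EuclideanSpace.single i (1:ℝ))|)
            * ‖gradient S m‖ := by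
        refine (Finset.abs_sum_le_sum_abs _ _).trans ?_
        rw [Finset.sum_mul]
        refine Finset.sum_le_sum fun j _ => ?_
        rw [abs_mul]
        exact mul_le_mul_of_nonneg_left (comp_le_norm _ _) (abs_nonneg _)
      calc |∑ j, fderiv ℝ (fun m => P m k j) m (EuclideanSpace.single i (1:ℝ))
            * gradient S m j| * |h k|
          ≤ ((∑ j, |fderiv ℝ (fun m => P m k j) m (EuclideanSpace.single i (1:ℝ))|)
            * ‖gradient S m‖) * ‖h‖ :=
            mul_le_mul h1 (comp_le_norm _ _) (abs_nonneg _)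
              (mul_nonneg (Finset.sum_nonneg fun _ _ => abs_nonneg _) (norm_nonneg _))
        _ = (∑ j, |fderiv ℝ (fun m => P m k j) m (EuclideanSpace.single i (1:ℝ))|)
            * ‖h‖ * ‖gradient S m‖ := by ring
    refine (Finset.sum_le_sum fun k _ => hterm k).trans ?_
    rw [Finset.sum_mul, Finset.sum_mul]
  refine (Finset.sum_le_sum fun i _ => hbound i).trans ?_
  rw [Finset.sum_mul, Finset.sum_mul]

lemma gmat_mulVec_s15 (a w : E3) :
    toE (gmat a *ᵥ fun j => w j) = ⟪a, w⟫ • a - (‖a‖^2 : ℝ) • w := by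
  apply (WithLp.equiv 2 (Fin 3 → ℝ)).injective
  funext i
  show (gmat a *ᵥ fun j => w j) i = (⟪a, w⟫ • a - (‖a‖^2 : ℝ) • w) i
  have lhs : (gmat a *ᵥ fun j => w j) i = (∑ x, a i * a x * w x) - ‖a‖^2 * w i := by
    simp only [gmat, Matrix.mulVec, dotProduct, Matrix.sub_apply, Matrix.smul_apply,
      Matrix.vecMulVec_apply, smul_eq_mul]
    have hx : ∀ x : Fin 3, (a i * a x - ‖a‖^2 * (1 : Matrix (Fin 3) (Fin 3) ℝ) i x) * w x
        = a i * a x * w x - ‖a‖^2 * (1 : Matrix (Fin 3) (Fin 3) ℝ) i x * w x := fun x => by ring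
    simp only [hx]
    rw [Finset.sum_sub_distrib]
    congr 1
    simp [Matrix.one_apply, mul_assoc]
  have rhs : (⟪a, w⟫ • a - (‖a‖^2 : ℝ) • w) i = (∑ x, a x * w x) * a i - ‖a‖^2 * w i := by
    simp [PiLp.inner_apply, RCLike.inner_apply, conj_trivial]
    left
    exact Finset.sum_congr rfl fun j _ => mul_comm _ _
  rw [lhs, rhs, Finset.sum_mul]
  congr 1
  exact Finset.sum_congr rfl fun j _ => by ring

lemma gmat_bound (a w : E3) : ‖toE (gmat a *ᵥ fun j => w j)‖ ≤ 2 * ‖a‖^2 * ‖w‖ := by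
  rw [gmat_mulVec_s15]
  refine (norm_sub_le _ _).trans ?_
  rw [norm_smul, norm_smul]
  have h1 : |⟪a, w⟫_ℝ| ≤ ‖a‖ * ‖w‖ := abs_real_inner_le_norm a w
  have h2 : ‖⟪a, w⟫_ℝ‖ = |⟪a, w⟫_ℝ| := rfl
  have h3 : ‖(‖a‖^2 : ℝ)‖ = ‖a‖^2 := by
    rw [Real.norm_eq_abs, abs_of_nonneg (by positivity)]
  rw [h2, h3]
  nlinarith [norm_nonneg a, norm_nonneg w, abs_nonneg (⟪a, w⟫_ℝ)]

end Aux2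

/-- If `∇S` vanishes at the initial point of a solution of the metriplectic system,
then it vanishes along the entire trajectory. -/
theorem gradS_zero_propagates (H S : EuclideanSpace ℝ (Fin 3) → ℝ)
    (hH : ContDiff ℝ (⊤ : ℕ∞) H) (hS : ContDiff ℝ (⊤ : ℕ∞) S)
    (P : EuclideanSpace ℝ (Fin 3) → Matrix (Fin 3) (Fin 3) ℝ)
    (hPsmooth : ∀ i j, ContDiff ℝ (⊤ : ℕ∞) fun m => P m i j)
    (hskew : ∀ m, (P m)ᵀ = -(P m))
    (hCasimir : ∀ m, P m *ᵥ grad S m = 0)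
    (x : ℝ → EuclideanSpace ℝ (Fin 3))
    (hx : ∀ t, HasDerivAt x
      (WithLp.toLp 2 (P (x t) *ᵥ grad H (x t) + gmat (grad H (x t)) *ᵥ grad S (x t))) t)
    (h0 : grad S (x 0) = 0) :
    ∀ t : ℝ, grad S (x t) = 0 := by
  have hGS : ContDiff ℝ (⊤ : ℕ∞) (fun m : E3 => gradient S m) := gradient_contDiff hS
  have hGH : ContDiff ℝ (⊤ : ℕ∞) (fun m : E3 => gradient H m) := gradient_contDiff hH
  have hCas : ∀ m : E3, P m *ᵥ (fun j => gradient S m j) = 0 := fun m => hCasimir m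
  have hxc : Continuous x := continuous_iff_continuousAt.mpr fun t => (hx t).continuousAt
  set D : E3 → E3 →L[ℝ] E3 := fun m => fderiv ℝ (fun m => gradient S m) m with hDdef
  set f : ℝ → E3 := fun t => gradient S (x t) with hfdef
  set f' : ℝ → E3 := fun t =>
    D (x t) (toE (P (x t) *ᵥ fun j => gradient H (x t) j))
      + D (x t) (toE (gmat (gradient H (x t)) *ᵥ fun j => gradient S (x t) j)) with hf'def
  have hd : ∀ t, HasDerivAt f (f' t) t := by
    intro t
    have h1 : HasDerivAt f
        (D (x t) (WithLp.toLp 2 (P (x t) *ᵥ grad H (x t) + gmat (grad H (x t)) *ᵥ grad S (x t)))) t :=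
      (hGS.differentiable (by simp) (x t)).hasFDerivAt.comp_hasDerivAt t (hx t)
    have h2 : D (x t) (WithLp.toLp 2 (P (x t) *ᵥ grad H (x t) + gmat (grad H (x t)) *ᵥ grad S (x t)))
        = f' t := by rw [WithLp.toLp_add]; exact (map_add (D (x t)) _ _)
    rwa [h2] at h1
  set c : ℝ → ℝ := fun t =>
    (∑ i, ∑ k, ∑ j, |fderiv ℝ (fun m => P m k j) (x t) (EuclideanSpace.single i (1:ℝ))|)
      * ‖gradient H (x t)‖ + ‖D (x t)‖ * (2 * ‖gradient H (x t)‖^2) with hcdef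
  have hb : ∀ t, ‖f' t‖ ≤ c t * ‖f t‖ := by
    intro t
    refine (norm_add_le _ _).trans ?_
    have hb1 := term1_bound hS hPsmooth hskew hCas (x t) (gradient H (x t))
    have hb2 : ‖D (x t) (toE (gmat (gradient H (x t)) *ᵥ fun j => gradient S (x t) j))‖
        ≤ ‖D (x t)‖ * (2 * ‖gradient H (x t)‖^2 * ‖gradient S (x t)‖) := by
      refine (ContinuousLinearMap.le_opNorm _ _).trans ?_
      exact mul_le_mul_of_nonneg_left (gmat_bound _ _) (norm_nonneg _)
    have := add_le_add hb1 hb2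
    refine this.trans (le_of_eq ?_)
    rw [hcdef, hfdef]
    ring
  have hc : Continuous c := by
    have hDP : ∀ k j i, Continuous fun t =>
        |fderiv ℝ (fun m => P m k j) (x t) (EuclideanSpace.single i (1:ℝ))| := by
      intro k j i
      exact continuous_abs.comp
        ((ContinuousLinearMap.apply ℝ ℝ (EuclideanSpace.single i (1:ℝ))).continuous.comp
          (((hPsmooth k j).fderiv_right (m := (⊤ : ℕ∞)) (by simp)).continuous.comp hxc))
    have hH' : Continuous fun t => ‖gradient H (x t)‖ := (hGH.continuous.comp hxc).norm
    have hDn : Continuous fun t => ‖D (x t)‖ :=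
      ((hGS.fderiv_right (m := (⊤ : ℕ∞)) (by simp)).continuous.comp hxc).norm
    refine Continuous.add (Continuous.mul ?_ hH') (hDn.mul (continuous_const.mul (hH'.pow 2)))
    refine continuous_finset_sum _ fun i _ => continuous_finset_sum _ fun k _ =>
      continuous_finset_sum _ fun j _ => hDP k j i
  have hfin := aux_gronwall hd hc hb h0
  intro t
  exact hfin t
end
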